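/- For every j with 0 ≤ j ≤ n, the j-th derivative of the two-point Hermite interpolant H_{m,n} at s = 1 satisfies H_{m,n}^{(j)}(1)/j! = q_j. -/

import Mathlib

noncomputable def blend (m n : ℕ) (p q : ℕ → ℝ) (s : ℝ) : ℝ :=
  (∑ j ∈ Finset.range (m + 1),
      (∑ k ∈ Finset.range (m - j + 1),
          ((n + k).choose k : ℝ) * s ^ (k + j) * (1 - s) ^ (n + 1)) * p j)
  + ∑ j ∈ Finset.range (n + 1),
      (∑ k ∈ Finset.range (n - j + 1),
          ((m + k).choose k : ℝ) * s ^ (m + 1) * (1 - s) ^ (k + j)) * (-1 : ℝ) ^ j * q j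

/-!
Substituting `s ↦ 1 - s` exchanges `(m, p)` with `(n, q)` up to the signs `(-1) ^ j`, so it
suffices to read off the Taylor coefficients of `blend` at `0`, i.e. the coefficients of a
polynomial. Modulo `X ^ (m + 1)` the `q`-part vanishes, and since `∑_{k ≤ d} C(N + k, k) X ^ k`
truncates `(1 - X)⁻¹ ^ (N + 1)`, the `j`-th summand of the `p`-part reduces to `p j * X ^ j`.
-/

open Polynomial Finset

theorem neg_one_pow_mul_neg_one_pow_mul {R : Type*} [Ring R] (i : ℕ) (x : R) :
    (-1) ^ i * ((-1) ^ i * x) = x := by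
  rw [← mul_assoc, pow_mul_pow_eq_one i (by simp), one_mul]

namespace Polynomial

variable {𝕜 : Type*} [NontriviallyNormedField 𝕜]

theorem iteratedDeriv_eval (P : 𝕜[X]) (k : ℕ) :
    iteratedDeriv k (fun x => P.eval x) = fun x => (derivative^[k] P).eval x := by
  induction k with
  | zero => rfl
  | succ k ih =>
    funext x
    rw [iteratedDeriv_succ, ih, Function.iterate_succ_apply']
    exact Polynomial.deriv _

theorem iteratedDeriv_eval_zero (P : 𝕜[X]) (k : ℕ) :
    iteratedDeriv k (fun x => P.eval x) 0 = k.factorial * P.coeff k := by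
  simp only [iteratedDeriv_eval, ← coeff_zero_eq_eval_zero, coeff_iterate_derivative, zero_add,
    Nat.descFactorial_self, nsmul_eq_mul]

variable {R : Type*} [CommRing R]

theorem X_pow_dvd_sum_choose_mul_one_sub_pow_sub_one (N d : ℕ) :
    (X : R[X]) ^ (d + 1) ∣
      (∑ k ∈ range (d + 1), C ((N + k).choose k : R) * X ^ k) * (1 - X) ^ (N + 1) - 1 := by
  set f : PowerSeries R := PowerSeries.mk fun k => ((N + k).choose N : R)
  have htrunc :
      ∑ k ∈ range (d + 1), C ((N + k).choose k : R) * X ^ k = PowerSeries.trunc (d + 1) f := by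
    ext i
    simp [f, PowerSeries.coeff_trunc, coeff_X_pow, Nat.choose_symm_add (a := N) (b := i)]
  refine X_pow_dvd_iff.2 fun i hi => ?_
  rw [htrunc, ← coeff_coe]
  simp only [coe_sub, coe_mul, coe_pow, coe_one, coe_X]
  rw [map_sub, ← PowerSeries.coeff_coe_trunc_of_lt hi, PowerSeries.trunc_trunc_mul,
    PowerSeries.coeff_coe_trunc_of_lt hi, PowerSeries.mk_add_choose_mul_one_sub_pow_eq_one, sub_self]

end Polynomial

noncomputable def blendPoly (m n : ℕ) (p q : ℕ → ℝ) : ℝ[X] :=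
  (∑ j ∈ range (m + 1),
      (∑ k ∈ range (m - j + 1), C ((n + k).choose k : ℝ) * X ^ (k + j) * (1 - X) ^ (n + 1))
        * C (p j))
  + ∑ j ∈ range (n + 1),
      (∑ k ∈ range (n - j + 1), C ((m + k).choose k : ℝ) * X ^ (m + 1) * (1 - X) ^ (k + j))
        * C ((-1) ^ j * q j)

theorem blend_eq_eval_blendPoly (m n : ℕ) (p q : ℕ → ℝ) :
    blend m n p q = fun s => (blendPoly m n p q).eval s := by
  funext s
  simp [blend, blendPoly, eval_finsetSum, mul_assoc]

theorem X_pow_dvd_blendPoly_sub (m n : ℕ) (p q : ℕ → ℝ) :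
    X ^ (m + 1) ∣ blendPoly m n p q - ∑ j ∈ range (m + 1), C (p j) * X ^ j := by
  rw [blendPoly, add_sub_right_comm, ← sum_sub_distrib]
  refine dvd_add (dvd_sum fun j hj => ?_) (dvd_sum fun j _ => ?_)
  · have hjm : j + (m - j + 1) = m + 1 := by grind
    have hterm : (∑ k ∈ range (m - j + 1),
          C ((n + k).choose k : ℝ) * X ^ (k + j) * (1 - X) ^ (n + 1)) * C (p j) - C (p j) * X ^ j
        = C (p j) * X ^ j * ((∑ k ∈ range (m - j + 1), C ((n + k).choose k : ℝ) * X ^ k)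
            * (1 - X) ^ (n + 1) - 1) := by
      rw [mul_sub, mul_one, sum_mul, sum_mul, mul_sum]
      congr 1
      exact sum_congr rfl fun k _ => by ring
    rw [hterm, ← hjm, pow_add]
    exact mul_dvd_mul (dvd_mul_left _ _) (X_pow_dvd_sum_choose_mul_one_sub_pow_sub_one n (m - j))
  · exact (dvd_sum fun k _ => (dvd_mul_left _ _).mul_right _).mul_right _

theorem coeff_blendPoly {m j : ℕ} (n : ℕ) (p q : ℕ → ℝ) (hj : j ≤ m) :
    (blendPoly m n p q).coeff j = p j := by
  have h := X_pow_dvd_iff.1 (X_pow_dvd_blendPoly_sub m n p q) j (Nat.lt_succ_of_le hj)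
  rw [coeff_sub, sub_eq_zero] at h
  simp [h, finsetSum_coeff, coeff_C_mul, coeff_X_pow, Nat.lt_succ_of_le hj]

theorem blend_iteratedDeriv_zero {m j : ℕ} (n : ℕ) (p q : ℕ → ℝ) (hj : j ≤ m) :
    iteratedDeriv j (blend m n p q) 0 = j.factorial * p j := by
  rw [blend_eq_eval_blendPoly, iteratedDeriv_eval_zero, coeff_blendPoly n p q hj]

theorem blend_eq_blend_one_sub (m n : ℕ) (p q : ℕ → ℝ) (s : ℝ) :
    blend m n p q s
      = blend n m (fun i => (-1) ^ i * q i) (fun i => (-1) ^ i * p i) (1 - s) := by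
  simp only [blend, sub_sub_cancel, mul_assoc, neg_one_pow_mul_neg_one_pow_mul]
  rw [add_comm]
  simp only [mul_comm (s ^ _) ((1 - s) ^ _)]

theorem blend_iteratedDeriv_one (m n : ℕ) (p q : ℕ → ℝ) (j : ℕ) (hj : j ≤ n) :
    iteratedDeriv j (blend m n p q) 1 / (Nat.factorial j : ℝ) = q j := by
  have hfac : (j.factorial : ℝ) ≠ 0 := by positivity
  rw [funext (blend_eq_blend_one_sub m n p q), iteratedDeriv_comp_const_sub]
  simp only [sub_self, blend_iteratedDeriv_zero m _ _ hj, smul_eq_mul]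
  rw [mul_left_comm, neg_one_pow_mul_neg_one_pow_mul, mul_div_cancel_left₀ _ hfac]
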